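/- arXiv:1206.0587 — 3 statements merged into one kernel-verified Lean document; each statement's English description precedes it below -/
import Mathlib

section
/- Let (G,τ) be a metrizable precompact Hausdorff abelian group. If (G,τ) is ss-characterized, then the group G is countable. -/
open Filter Topology

noncomputable section

namespace SSChar

/-- The circle group `𝕋 = ℝ/ℤ`. -/
abbrev Torus : Type := AddCircle (1 : ℝ)

variable {G : Type*}

/-- The covering condition defining precompactness (total boundedness) of a group
topology: every neighborhood `U` of `0` admits a finite set `F` with `G = F + U`. -/
def PrecompactCover [AddCommGroup G] (t : TopologicalSpace G) : Prop :=
  ∀ U ∈ @nhds G t 0, ∃ F : Set G, F.Finite ∧ ∀ x : G, ∃ f ∈ F, x - f ∈ U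

/-- `t` is a Hausdorff group topology on `G`. -/
def IsHausdorffGroupTopology [AddCommGroup G] (t : TopologicalSpace G) : Prop :=
  @IsTopologicalAddGroup G t _ ∧ @T2Space G t

/-- `t` is a precompact Hausdorff group topology on `G`. -/
def IsPrecompactGroupTopology [AddCommGroup G] (t : TopologicalSpace G) : Prop :=
  IsHausdorffGroupTopology t ∧ PrecompactCover t

/-- The sequence `u` converges to `0` in the topology `t`. -/
def ConvergesToZero [AddCommGroup G] (t : TopologicalSpace G) (u : ℕ → G) : Prop :=
  Filter.Tendsto u Filter.atTop (@nhds G t 0)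

/-- `u` is a TB-sequence: some precompact Hausdorff group topology makes `u → 0`. -/
def IsTBSequence [AddCommGroup G] (u : ℕ → G) : Prop :=
  ∃ t : TopologicalSpace G, IsPrecompactGroupTopology t ∧ ConvergesToZero t u

/-- `t` is the finest precompact Hausdorff group topology in which `u → 0`,
i.e. `t = τ_u`.  (Recall that in Mathlib's order on topologies, finer means `≤`.) -/
def IsTauU [AddCommGroup G] (u : ℕ → G) (t : TopologicalSpace G) : Prop :=
  IsPrecompactGroupTopology t ∧ ConvergesToZero t u ∧
    ∀ t' : TopologicalSpace G, IsPrecompactGroupTopology t' → ConvergesToZero t' u → t ≤ t'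

/-- `t` is the finest Hausdorff group topology in which `u → 0`, i.e. `t = 𝒯_u`. -/
def IsTTu [AddCommGroup G] (u : ℕ → G) (t : TopologicalSpace G) : Prop :=
  IsHausdorffGroupTopology t ∧ ConvergesToZero t u ∧
    ∀ t' : TopologicalSpace G, IsHausdorffGroupTopology t' → ConvergesToZero t' u → t ≤ t'

/-- `(G, t)` is single-sequence characterized: `t = τ_u` for some (TB-)sequence `u`. -/
def SSCharacterized [AddCommGroup G] (t : TopologicalSpace G) : Prop :=
  ∃ u : ℕ → G, IsTauU u t

/-- `χ` is a `t`-continuous character of `G`. -/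
def IsContChar [AddCommGroup G] (t : TopologicalSpace G) (χ : G →+ Torus) : Prop :=
  @Continuous G Torus t _ χ

/-- The group of `t`-continuous characters of `G`. -/
def charGroup (G : Type*) [AddCommGroup G] (t : TopologicalSpace G) : Type _ :=
  {χ : G →+ Torus // IsContChar t χ}

/-- The compact-open topology on the character group: this makes it the
Pontryagin dual `(G,t)^∧`. -/
def charTopology (G : Type*) [AddCommGroup G] (t : TopologicalSpace G) :
    TopologicalSpace (charGroup G t) :=
  TopologicalSpace.generateFrom
    { S | ∃ (K : Set G) (U : Set Torus), @IsCompact G t K ∧ IsOpen U ∧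
        S = { χ : charGroup G t | ∀ x ∈ K, χ.1 x ∈ U } }

/-- The Bohr modification `t⁺` of `t`: the initial topology induced by all
`t`-continuous characters. -/
def bohrModification [AddCommGroup G] (t : TopologicalSpace G) : TopologicalSpace G :=
  ⨅ χ : charGroup G t, TopologicalSpace.induced (χ.1 : G → Torus) inferInstance

/-- The Bohr topology of the (discrete) abelian group `X`: the initial topology
induced by all homomorphisms `X → 𝕋`. -/
def bohrDiscrete (X : Type*) [AddCommGroup X] : TopologicalSpace X :=
  ⨅ χ : X →+ Torus, TopologicalSpace.induced (χ : X → Torus) inferInstance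

/-- The extension topology `ζ̄` on `G` of a group topology `ζ` on the subgroup `H`:
its neighborhood filter at `x` is generated by the sets `x + V`, `V` a
`ζ`-neighborhood of `0` in `H`. -/
def extTopology [AddCommGroup G] (H : AddSubgroup G) (ζ : TopologicalSpace H) :
    TopologicalSpace G :=
  TopologicalSpace.mkOfNhds fun x => Filter.map (fun h : H => x + (h : G)) (@nhds H ζ 0)

/-- The subspace topology induced on a subgroup `H` by a topology `t` on `G`. -/
def restrictTopology [AddCommGroup G] (H : AddSubgroup G) (t : TopologicalSpace G) :
    TopologicalSpace H :=
  t.induced (Subtype.val : H → G)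

/-- The quotient topology on `G ⧸ H` induced by a topology `t` on `G`. -/
def quotientTopology [AddCommGroup G] (H : AddSubgroup G) (t : TopologicalSpace G) :
    TopologicalSpace (G ⧸ H) :=
  t.coinduced (QuotientAddGroup.mk : G → G ⧸ H)

/-- `H` is B-embedded in `(G, t)`: every (algebraic) character of `G ⧸ H` is
continuous in the quotient topology. -/
def IsBEmbedded [AddCommGroup G] (t : TopologicalSpace G) (H : AddSubgroup G) : Prop :=
  ∀ χ : G ⧸ H →+ Torus, @Continuous (G ⧸ H) Torus (quotientTopology H t) _ χ

/-- `t` is the finest precompact extension to `G` of the topology `ζ` on the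
subgroup `H`: `t` is a precompact Hausdorff group topology restricting to `ζ` on `H`,
and every precompact Hausdorff group topology on `G` restricting to `ζ` on `H`
is coarser than `t`. -/
def IsFinestPrecompactExtension [AddCommGroup G] (H : AddSubgroup G)
    (ζ : TopologicalSpace H) (t : TopologicalSpace G) : Prop :=
  IsPrecompactGroupTopology t ∧ restrictTopology H t = ζ ∧
    ∀ t' : TopologicalSpace G, IsPrecompactGroupTopology t' → restrictTopology H t' = ζ →
      t ≤ t'

/-- `𝕋₊`: the image of `[-1/4, 1/4]` under the quotient map `ℝ → 𝕋`. -/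
def Tplus : Set Torus := (fun x : ℝ => (x : Torus)) '' Set.Icc (-(1/4) : ℝ) (1/4)

/-- `A` is quasi-convex in `(G, t)`. -/
def IsQuasiConvex [AddCommGroup G] (t : TopologicalSpace G) (A : Set G) : Prop :=
  ∀ g ∉ A, ∃ χ : G →+ Torus, IsContChar t χ ∧ (∀ a ∈ A, χ a ∈ Tplus) ∧ χ g ∉ Tplus

/-- `(G, t)` is locally quasi-convex: `0` has a neighborhood base of
quasi-convex sets. -/
def IsLocallyQuasiConvex [AddCommGroup G] (t : TopologicalSpace G) : Prop :=
  ∀ U ∈ @nhds G t 0, ∃ V ∈ @nhds G t 0, V ⊆ U ∧ IsQuasiConvex t V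

/-- The weight of a topology: the minimal cardinality of a base. -/
def tweight {X : Type*} (t : TopologicalSpace X) : Cardinal :=
  sInf { c : Cardinal |
    ∃ B : Set (Set X), @TopologicalSpace.IsTopologicalBasis X t B ∧ c = Cardinal.mk B }

/-- `(G, t)` is maximally almost periodic: the `t`-continuous characters
separate the points of `G`. -/
def IsMAP [AddCommGroup G] (t : TopologicalSpace G) : Prop :=
  ∀ x : G, x ≠ 0 → ∃ χ : G →+ Torus, IsContChar t χ ∧ χ x ≠ 0

/-- Two topologies on `G` are compatible: they have the same continuous characters. -/
def Compatible [AddCommGroup G] (t t' : TopologicalSpace G) : Prop :=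
  ∀ χ : G →+ Torus, IsContChar t χ ↔ IsContChar t' χ

/-- `(G, t)` is a MAP-Mackey group: it is a MAP Hausdorff group topology and every
compatible MAP group topology on `G` is coarser. -/
def IsMAPMackey [AddCommGroup G] (t : TopologicalSpace G) : Prop :=
  IsHausdorffGroupTopology t ∧ IsMAP t ∧
    ∀ t' : TopologicalSpace G, @IsTopologicalAddGroup G t' _ → IsMAP t' → Compatible t t' →
      t ≤ t'

/-- `(X, t)` is a k-space: a subset is closed as soon as its intersection with every
compact subset `K` is closed in `K`. -/
def IsKSpace {X : Type*} (t : TopologicalSpace X) : Prop :=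
  ∀ A : Set X,
    (∀ K : Set X, @IsCompact X t K →
      @IsClosed K (t.induced (Subtype.val : K → X)) {x : K | (x : X) ∈ A}) →
    @IsClosed X t A

/-- `(X, t)` is pseudocompact: every continuous real-valued function is bounded. -/
def IsPseudocompact {X : Type*} (t : TopologicalSpace X) : Prop :=
  ∀ f : X → ℝ, @Continuous X ℝ t _ f → ∃ C : ℝ, ∀ x : X, |f x| ≤ C

/-- `(X, t)` is sequentially complete: every Cauchy sequence (w.r.t. the group
uniformity) converges. -/
def SeqComplete {X : Type*} [AddCommGroup X] (t : TopologicalSpace X) : Prop :=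
  ∀ x : ℕ → X, (∀ U ∈ @nhds X t 0, ∃ N : ℕ, ∀ m ≥ N, ∀ n ≥ N, x m - x n ∈ U) →
    ∃ a : X, Filter.Tendsto x Filter.atTop (@nhds X t a)

/-!
Since `τ = τ_u`, every character `χ` with `χ (u n) → 0` is `τ`-continuous: the infimum of `τ`
and the topology induced by `χ` is still a precompact Hausdorff group topology in which `u` is
null. In particular, if `S` is the countable subgroup generated by `u`, every character of
`G ⧸ S` is `τ`-continuous on `G`. A first countable precompact group has only countably many
continuous characters, because the circle has no small subgroups: a character that is small on a
neighbourhood `V` of `0` is determined by rough values on a finite set `F` with `F + V = G`.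
An abelian group with countably many characters is finite: its dual is a countable compact group,
hence discrete by Baire's theorem, and characters separate points. So `G ⧸ S` is finite and `G`
is countable.
-/

lemma precompactCover_iff_finite_cover_small [AddCommGroup G] {t : TopologicalSpace G}
    (ht : @IsTopologicalAddGroup G t _) :
    PrecompactCover t ↔ ∀ U ∈ @nhds G t 0, ∃ 𝒜 : Set (Set G), 𝒜.Finite ∧ ⋃₀ 𝒜 = Set.univ ∧
      ∀ A ∈ 𝒜, ∀ x ∈ A, ∀ y ∈ A, x - y ∈ U := by
  let _ := t
  constructor
  · intro h U hU
    obtain ⟨V, hV, hVU⟩ := exists_nhds_half_neg hU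
    obtain ⟨F, hF, hcov⟩ := h V hV
    refine ⟨(fun f => (· - f) ⁻¹' V) '' F, hF.image _, ?_, ?_⟩
    · refine Set.eq_univ_of_forall fun x => ?_
      obtain ⟨f, hf, hxf⟩ := hcov x
      exact ⟨_, Set.mem_image_of_mem _ hf, hxf⟩
    · rintro _ ⟨f, -, rfl⟩ x hx y hy
      simpa using hVU _ hx _ hy
  · intro h U hU
    obtain ⟨𝒜, h𝒜, hcov, hsmall⟩ := h U hU
    refine ⟨(fun A => Classical.epsilon (· ∈ A)) '' 𝒜, h𝒜.image _, fun x => ?_⟩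
    obtain ⟨A, hA, hxA⟩ := Set.mem_sUnion.mp (hcov ▸ Set.mem_univ x)
    exact ⟨_, Set.mem_image_of_mem _ hA, hsmall A hA x hxA _ (Classical.epsilon_spec ⟨x, hxA⟩)⟩

lemma PrecompactCover.inf [AddCommGroup G] {t₁ t₂ : TopologicalSpace G}
    (hg₁ : @IsTopologicalAddGroup G t₁ _) (hg₂ : @IsTopologicalAddGroup G t₂ _)
    (h₁ : PrecompactCover t₁) (h₂ : PrecompactCover t₂) : PrecompactCover (t₁ ⊓ t₂) := by
  rw [precompactCover_iff_finite_cover_small (topologicalAddGroup_inf hg₁ hg₂)]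
  rw [precompactCover_iff_finite_cover_small hg₁] at h₁
  rw [precompactCover_iff_finite_cover_small hg₂] at h₂
  intro U hU
  rw [@nhds_inf G t₁ t₂ 0, Filter.mem_inf_iff] at hU
  obtain ⟨U₁, hU₁, U₂, hU₂, rfl⟩ := hU
  obtain ⟨𝒜, h𝒜, hcov𝒜, hsmall𝒜⟩ := h₁ U₁ hU₁
  obtain ⟨ℬ, hℬ, hcovℬ, hsmallℬ⟩ := h₂ U₂ hU₂
  refine ⟨Set.image2 (· ∩ ·) 𝒜 ℬ, h𝒜.image2 _ hℬ, Set.eq_univ_of_forall fun x => ?_, ?_⟩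
  · obtain ⟨A, hA, hxA⟩ := Set.mem_sUnion.mp (hcov𝒜 ▸ Set.mem_univ x)
    obtain ⟨B, hB, hxB⟩ := Set.mem_sUnion.mp (hcovℬ ▸ Set.mem_univ x)
    exact ⟨A ∩ B, Set.mem_image2_of_mem hA hB, hxA, hxB⟩
  · rintro _ ⟨A, hA, B, hB, rfl⟩ x hx y hy
    exact ⟨hsmall𝒜 A hA x hx.1 y hy.1, hsmallℬ B hB x hx.2 y hy.2⟩

lemma PrecompactCover.induced [AddCommGroup G] {H : Type*} [AddCommGroup H] [TopologicalSpace H]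
    [IsTopologicalAddGroup H] (hH : PrecompactCover ‹TopologicalSpace H›) (φ : G →+ H) :
    PrecompactCover (TopologicalSpace.induced φ ‹_›) := by
  rw [precompactCover_iff_finite_cover_small (topologicalAddGroup_induced φ)]
  rw [precompactCover_iff_finite_cover_small ‹_›] at hH
  intro U hU
  obtain ⟨W, hW, hWU⟩ := (nhds_induced φ 0 ▸ hU :)
  obtain ⟨𝒜, h𝒜, hcov, hsmall⟩ := hH W (map_zero φ ▸ hW)
  refine ⟨Set.preimage φ '' 𝒜, h𝒜.image _, ?_, ?_⟩
  · rw [Set.sUnion_image, ← Set.preimage_iUnion₂, ← Set.sUnion_eq_biUnion, hcov, Set.preimage_univ]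
  · rintro _ ⟨A, hA, rfl⟩ x hx y hy
    exact hWU (by simpa using hsmall A hA _ hx _ hy)

lemma precompactCover_of_compactSpace [AddCommGroup G] [TopologicalSpace G]
    [IsTopologicalAddGroup G] [CompactSpace G] : PrecompactCover ‹TopologicalSpace G› := by
  intro U hU
  obtain ⟨F, hF⟩ := compact_covered_by_add_left_translates isCompact_univ
    ⟨0, mem_interior_iff_mem_nhds.mpr hU⟩
  refine ⟨-(F : Set G), F.finite_toSet.neg, fun x => ?_⟩
  obtain ⟨g, hg, hgx⟩ := Set.mem_iUnion₂.mp (hF (Set.mem_univ x))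
  exact ⟨-g, by simpa using hg, by simpa [add_comm] using hgx⟩

lemma IsTauU.continuous_of_tendsto [AddCommGroup G] {u : ℕ → G} {τ : TopologicalSpace G}
    (hτ : IsTauU u τ) {K : Type*} [AddCommGroup K] [TopologicalSpace K] [IsTopologicalAddGroup K]
    [CompactSpace K] (χ : G →+ K) (hχ : Tendsto (χ ∘ u) atTop (𝓝 0)) :
    Continuous[τ, _] χ := by
  obtain ⟨⟨⟨hg, ht2⟩, hcov⟩, hu, hmax⟩ := hτ
  let σ := TopologicalSpace.induced χ ‹TopologicalSpace K›
  have hgσ : @IsTopologicalAddGroup G σ _ := topologicalAddGroup_induced χ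
  have hpre : IsPrecompactGroupTopology (τ ⊓ σ) :=
    ⟨⟨topologicalAddGroup_inf hg hgσ, t2Space_antitone inf_le_left ht2⟩,
      hcov.inf hg hgσ (precompactCover_of_compactSpace.induced χ)⟩
  have hconv : ConvergesToZero (τ ⊓ σ) u := by
    rw [ConvergesToZero, @nhds_inf G τ σ 0, tendsto_inf, nhds_induced, tendsto_comap_iff,
      map_zero]
    exact ⟨hu, hχ⟩
  exact continuous_iff_le_induced.mpr ((hmax _ hpre hconv).trans inf_le_right)

lemma Torus.exists_pos_forall_norm_nsmul_lt_imp_eq_zero :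
    ∃ ε > 0, ∀ t : Torus, (∀ n : ℕ, ‖n • t‖ < ε) → t = 0 := by
  have hW : AddCircle.toCircle ⁻¹' Circle.centeredArc (Real.pi / 2) ∈ 𝓝 (0 : Torus) := by
    refine AddCircle.continuous_toCircle.continuousAt.preimage_mem_nhds
      ((Circle.isOpen_centeredArc _).mem_nhds ?_)
    rw [AddCircle.toCircle_zero]
    exact ⟨0, by simp [Real.pi_pos], Circle.exp_zero⟩
  obtain ⟨ε, hε, hball⟩ := Metric.mem_nhds_iff.mp hW
  refine ⟨ε, hε, fun t ht => AddCircle.injective_toCircle one_ne_zero ?_⟩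
  rw [AddCircle.toCircle_zero]
  refine Circle.eq_one_of_forall_pow_mem_centeredArc_pi_div_two fun n _ => ?_
  rw [← AddCircle.toCircle_nsmul]
  exact hball (by simpa using ht n)

lemma eq_of_dist_lt_on_cover [AddCommGroup G] {ε : ℝ}
    (hε : ∀ t : Torus, (∀ n : ℕ, ‖n • t‖ < ε) → t = 0) {V F : Set G}
    (hF : ∀ x, ∃ f ∈ F, x - f ∈ V) {χ ψ : G →+ Torus} (hχ : ∀ x ∈ V, ‖χ x‖ < ε / 3)
    (hψ : ∀ x ∈ V, ‖ψ x‖ < ε / 3) (hχψ : ∀ f ∈ F, dist (χ f) (ψ f) < ε / 3) : χ = ψ := by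
  ext x
  rw [← sub_eq_zero]
  refine hε _ fun n => ?_
  obtain ⟨f, hf, hnxf⟩ := hF (n • x)
  have hsplit : n • (χ x - ψ x) = χ (n • x - f) - ψ (n • x - f) + (χ f - ψ f) := by
    simp only [map_sub, map_nsmul, nsmul_sub]; abel
  calc ‖n • (χ x - ψ x)‖
      ≤ ‖χ (n • x - f)‖ + ‖ψ (n • x - f)‖ + dist (χ f) (ψ f) := by
        rw [hsplit, dist_eq_norm]
        refine (norm_add_le _ _).trans ?_
        gcongr
        exact norm_sub_le _ _
    _ < ε / 3 + ε / 3 + ε / 3 := by gcongr <;> grind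
    _ = ε := by ring

lemma countable_continuous_addMonoidHom_torus [AddCommGroup G] [t : TopologicalSpace G]
    [FirstCountableTopology G] (hG : PrecompactCover t) :
    Countable {χ : G →+ Torus // Continuous χ} := by
  obtain ⟨ε, hε, hsmall⟩ := Torus.exists_pos_forall_norm_nsmul_lt_imp_eq_zero
  obtain ⟨V, hV⟩ := (𝓝 (0 : G)).exists_antitone_basis
  let L : ℕ → Set (G →+ Torus) := fun m => {χ | ∀ x ∈ V m, ‖χ x‖ < ε / 3}
  have hL : {χ : G →+ Torus | Continuous χ} ⊆ ⋃ m, L m := by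
    intro χ hχ
    have hpre : χ ⁻¹' Metric.ball 0 (ε / 3) ∈ 𝓝 (0 : G) :=
      hχ.continuousAt.preimage_mem_nhds (by simpa using Metric.ball_mem_nhds 0 (by positivity))
    obtain ⟨m, -, hm⟩ := hV.toHasBasis.mem_iff.mp hpre
    exact Set.mem_iUnion.mpr ⟨m, fun x hx => by simpa using hm hx⟩
  have hLfin : ∀ m, (L m).Finite := by
    intro m
    obtain ⟨F, hF, hcov⟩ := hG (V m) (hV.toHasBasis.mem_of_mem trivial)
    obtain ⟨T, -, hT, hcover⟩ :=
      finite_cover_balls_of_compact (isCompact_univ (X := Torus)) (by positivity : 0 < ε / 6)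
    choose c hcT hc using fun s : Torus => Set.mem_iUnion₂.mp (hcover (Set.mem_univ s))
    have := hF.to_subtype
    have := hT.to_subtype
    refine Set.Finite.of_finite_image (f := fun χ (f : F) => (⟨c (χ f), hcT _⟩ : T))
      (Set.toFinite _) fun χ hχ ψ hψ hcode => ?_
    refine eq_of_dist_lt_on_cover hsmall hcov hχ hψ fun f hf => ?_
    have hcf : c (χ f) = c (ψ f) := congrArg Subtype.val (congrFun hcode ⟨f, hf⟩)
    calc dist (χ f) (ψ f) ≤ dist (χ f) (c (χ f)) + dist (ψ f) (c (ψ f)) := by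
          rw [hcf]; exact dist_triangle_right _ _ _
      _ < ε / 6 + ε / 6 := add_lt_add (hc _) (hc _)
      _ = ε / 3 := by ring
  exact ((Set.countable_iUnion fun m => (hLfin m).countable).mono hL).to_subtype

lemma finite_of_countable_of_compactSpace (K : Type*) [AddGroup K] [TopologicalSpace K]
    [IsTopologicalAddGroup K] [CompactSpace K] [T2Space K] [Countable K] : Finite K := by
  obtain ⟨x, hx⟩ := nonempty_interior_of_iUnion_of_closed (f := fun x : K => ({x} : Set K))
    (fun _ => isClosed_singleton) (Set.iUnion_of_singleton K)
  have hopen : IsOpen ({x} : Set K) := by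
    rw [← hx.subset_singleton_iff.mp interior_subset]
    exact isOpen_interior
  have : DiscreteTopology K := discreteTopology_of_isOpen_singleton_zero
    (by simpa using hopen.preimage (continuous_add_const x))
  exact finite_of_compact_of_discrete

lemma finite_addMonoidHom_of_countable (A K : Type*) [AddCommGroup A] [AddCommGroup K]
    [TopologicalSpace K] [IsTopologicalAddGroup K] [CompactSpace K] [T2Space K]
    [Countable (A →+ K)] : Finite (A →+ K) := by
  let H := (AddMonoidHom.coeFn A K).range
  have : CompactSpace H := isCompact_iff_compactSpace.mp
    (AddMonoidHom.isClosed_range_coe A K).isCompact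
  have : Countable H := (AddMonoidHom.coeFn A K).rangeRestrict_surjective.countable
  have := finite_of_countable_of_compactSpace H
  exact Finite.of_injective _
    ((AddMonoidHom.coeFn A K).rangeRestrict_injective_iff.mpr DFunLike.coe_injective)

def ratCircleToTorus : AddCircle (1 : ℚ) →+ Torus :=
  QuotientAddGroup.map _ _ (Rat.castHom ℝ).toAddMonoidHom <| by
    rw [AddSubgroup.zmultiples_le]
    exact ⟨1, by simp⟩

lemma ratCircleToTorus_injective : Function.Injective ratCircleToTorus := by
  refine (injective_iff_map_eq_zero _).mpr fun x hx => ?_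
  induction x using QuotientAddGroup.induction_on with
  | H q =>
    obtain ⟨n, hn⟩ := (AddCircle.coe_eq_zero_iff (1 : ℝ)).mp hx
    exact (AddCircle.coe_eq_zero_iff (1 : ℚ)).mpr ⟨n, by
      simp only [zsmul_one, RingHom.toAddMonoidHom_eq_coe, AddMonoidHom.coe_coe,
        Rat.coe_castHom] at hn ⊢
      exact_mod_cast hn⟩

lemma eq_zero_of_forall_addMonoidHom_torus_eq_zero {A : Type*} [AddCommGroup A] {a : A}
    (h : ∀ χ : A →+ Torus, χ a = 0) : a = 0 :=
  CharacterModule.eq_zero_of_character_apply fun c =>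
    ratCircleToTorus_injective <| by rw [map_zero]; exact h (ratCircleToTorus.comp c)

lemma finite_of_finite_addMonoidHom_torus (A : Type*) [AddCommGroup A] [Finite (A →+ Torus)] :
    Finite A := by
  let N := Nat.card (A →+ Torus)
  have hN : ∀ a : A, N • a = 0 := fun a =>
    eq_zero_of_forall_addMonoidHom_torus_eq_zero fun χ => by
      rw [map_nsmul, ← AddMonoidHom.nsmul_apply, card_nsmul_eq_zero', AddMonoidHom.zero_apply]
  have := (AddCircle.finite_torsion (1 : ℝ) (n := N) Nat.card_pos).to_subtype
  refine Finite.of_injective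
    (fun a (χ : A →+ Torus) => (⟨χ a, by simp [← map_nsmul, hN]⟩ : {t : Torus | N • t = 0}))
    fun a b hab => ?_
  rw [← sub_eq_zero]
  refine eq_zero_of_forall_addMonoidHom_torus_eq_zero fun χ => ?_
  rw [map_sub, sub_eq_zero]
  exact congrArg Subtype.val (congrFun hab χ)

lemma IsTauU.countable_addMonoidHom_quotient [AddCommGroup G] {u : ℕ → G}
    {τ : TopologicalSpace G} [@FirstCountableTopology G τ] (hτ : IsTauU u τ)
    {S : AddSubgroup G} (huS : ∀ n, u n ∈ S) : Countable (G ⧸ S →+ Torus) := by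
  have := countable_continuous_addMonoidHom_torus hτ.1.2
  have hcont (ψ : G ⧸ S →+ Torus) : Continuous[τ, _] (ψ.comp (QuotientAddGroup.mk' S)) := by
    refine hτ.continuous_of_tendsto _ (tendsto_const_nhds.congr fun n => ?_)
    simp [(QuotientAddGroup.eq_zero_iff _).mpr (huS n)]
  refine Function.Injective.countable (β := {χ : G →+ Torus // Continuous χ})
    (f := fun ψ => ⟨ψ.comp (QuotientAddGroup.mk' S), hcont ψ⟩) fun ψ ψ' h => ?_
  exact (AddMonoidHom.cancel_right (QuotientAddGroup.mk'_surjective S)).mp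
    (congrArg Subtype.val h)

theorem stmt1_general {G : Type*} [AddCommGroup G] (τ : TopologicalSpace G)
    (hmet : @TopologicalSpace.MetrizableSpace G τ)
    (hss : SSCharacterized τ) : Countable G := by
  obtain ⟨u, hu⟩ := hss
  let S := (FreeAbelianGroup.lift u).range
  have : Countable S := (FreeAbelianGroup.lift u).rangeRestrict_surjective.countable
  have huS (n : ℕ) : u n ∈ S := ⟨FreeAbelianGroup.of n, FreeAbelianGroup.lift_apply_of u n⟩
  have : Countable (G ⧸ S →+ Torus) := hu.countable_addMonoidHom_quotient huS
  have := finite_addMonoidHom_of_countable (G ⧸ S) Torus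
  have := finite_of_finite_addMonoidHom_torus (G ⧸ S)
  exact Countable.of_equiv _ (AddSubgroup.addGroupEquivQuotientProdAddSubgroup (s := S)).symm

/-- A metrizable precompact Hausdorff abelian group which is
ss-characterized is countable. -/
theorem stmt1 {G : Type*} [AddCommGroup G] (τ : TopologicalSpace G)
    (hpre : IsPrecompactGroupTopology τ) (hmet : @TopologicalSpace.MetrizableSpace G τ)
    (hss : SSCharacterized τ) : Countable G :=
  stmt1_general τ hmet hss

end SSChar
end
end

section
/- Let G be a Hausdorff locally quasi-convex topological abelian group whose Pontryagin dual G^∧ is discrete. Then G is precompact. -/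
open Filter Topology

noncomputable section

namespace SSChar

variable {G : Type*}

/-!
The polar `V^▷` of a neighbourhood `V` of `0` is equicontinuous: if `k • W ⊆ V` for all
`1 ≤ k ≤ n`, every character of `V^▷` is `1/(4n)`-small on `W`. Discreteness of the dual
gives a compact `K` and `ε > 0` such that only the trivial character is `ε`-small on `K`.
Covering `K` by finitely many translates of a suitable `W`, two characters of `V^▷` that are
close on the finitely many centres must coincide, so `V^▷` is finite by compactness of a
finite power of `𝕋`. If `V` is quasi-convex it contains the preimage of a neighbourhood of
`0` under the evaluation map `G → 𝕋^{V^▷}`, and the image of `G` in this compact group is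
totally bounded.
-/

lemma exists_coe_eq_abs_eq_norm (y : Torus) : ∃ r : ℝ, (r : Torus) = y ∧ |r| = ‖y‖ := by
  obtain ⟨x, rfl⟩ := QuotientAddGroup.mk_surjective y
  refine ⟨x - round x, ?_, by rw [UnitAddCircle.norm_eq]⟩
  rw [AddCircle.coe_sub]
  simp

lemma mem_Tplus_iff {y : Torus} : y ∈ Tplus ↔ ‖y‖ ≤ 1 / 4 := by
  constructor
  · rintro ⟨s, hs, rfl⟩
    have hs : |s| ≤ 1 / 4 := abs_le.mpr hs
    rwa [(AddCircle.norm_coe_eq_abs_iff _ one_ne_zero).mpr (by norm_num; linarith)]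
  · intro hy
    obtain ⟨r, rfl, hr⟩ := exists_coe_eq_abs_eq_norm y
    exact ⟨r, abs_le.mp (hr ▸ hy), rfl⟩

lemma norm_nsmul_eq_mul_norm {y : Torus} {k : ℕ} (h : k * ‖y‖ ≤ 1 / 2) :
    ‖k • y‖ = k * ‖y‖ := by
  obtain ⟨r, rfl, hr⟩ := exists_coe_eq_abs_eq_norm y
  have hkr : |(k * r : ℝ)| = k * ‖(r : Torus)‖ := by rw [abs_mul, Nat.abs_cast, hr]
  rw [← AddCircle.coe_nsmul, nsmul_eq_mul, ← hkr,
    AddCircle.norm_coe_eq_abs_iff _ one_ne_zero, hkr]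
  simpa using h

lemma mul_norm_le_of_forall_nsmul_mem_Tplus {y : Torus} {n : ℕ}
    (h : ∀ k ∈ Finset.Icc 1 n, k • y ∈ Tplus) : n * ‖y‖ ≤ 1 / 4 := by
  suffices ∀ k ≤ n, k * ‖y‖ ≤ 1 / 4 from this n le_rfl
  intro k hkn
  induction k with
  | zero => norm_num
  | succ k ih =>
    have hy : ‖y‖ ≤ 1 / 4 := by
      simpa using mem_Tplus_iff.mp (h 1 (Finset.mem_Icc.mpr ⟨le_rfl, by omega⟩))
    have hk := ih (by omega)
    have hmem := mem_Tplus_iff.mp (h (k + 1) (Finset.mem_Icc.mpr ⟨by omega, hkn⟩))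
    rwa [norm_nsmul_eq_mul_norm (by push_cast; linarith)] at hmem

section

variable {G : Type*} [AddCommGroup G]

def polar (t : TopologicalSpace G) (A : Set G) : Set (G →+ Torus) :=
  {χ | IsContChar t χ ∧ ∀ a ∈ A, χ a ∈ Tplus}

lemma IsQuasiConvex.mem_of_forall_mem_polar {t : TopologicalSpace G} {A : Set G}
    (hA : IsQuasiConvex t A) {g : G} (hg : ∀ χ ∈ polar t A, χ g ∈ Tplus) : g ∈ A := by
  by_contra hgA
  obtain ⟨χ, hχ, hχA, hχg⟩ := hA g hgA
  exact hχg (hg χ ⟨hχ, hχA⟩)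

lemma exists_nhds_forall_mem_polar_norm_lt [t : TopologicalSpace G] [ContinuousAdd G]
    {V : Set G} (hV : V ∈ 𝓝 0) {δ : ℝ} (hδ : 0 < δ) :
    ∃ W ∈ 𝓝 (0 : G), ∀ χ ∈ polar t V, ∀ w ∈ W, ‖χ w‖ < δ := by
  obtain ⟨n, hn⟩ := exists_nat_gt (1 / δ)
  have hn' : 1 < n * δ := by rwa [div_lt_iff₀ hδ] at hn
  refine ⟨⋂ k ∈ Finset.Icc 1 n, (fun x : G => k • x) ⁻¹' V, ?_, fun χ hχ w hw => ?_⟩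
  · refine (Filter.biInter_finset_mem _).mpr fun k _ => ?_
    exact (continuous_nsmul k).continuousAt.preimage_mem_nhds (by rwa [smul_zero])
  · have hsmall : n * ‖χ w‖ ≤ 1 / 4 := mul_norm_le_of_forall_nsmul_mem_Tplus fun k hk => by
      rw [← map_nsmul]
      exact hχ.2 _ (Set.mem_iInter₂.mp hw k hk)
    nlinarith [norm_nonneg (χ w)]

lemma exists_isCompact_forall_dist_lt_mem_of_isOpen [t : TopologicalSpace G]
    {O : Set (charGroup G t)} (hO : IsOpen[charTopology G t] O) {χ₀ : charGroup G t}
    (hχ₀ : χ₀ ∈ O) : ∃ K : Set G, IsCompact K ∧ ∃ ε > (0 : ℝ),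
      ∀ ψ : charGroup G t, (∀ x ∈ K, dist (ψ.1 x) (χ₀.1 x) < ε) → ψ ∈ O := by
  induction hO generalizing χ₀ with
  | basic S hS =>
    obtain ⟨K, U, hK, hU, rfl⟩ := hS
    obtain ⟨δ, hδ, hthick⟩ := (hK.image χ₀.2).exists_thickening_subset_open hU
      (Set.image_subset_iff.mpr hχ₀)
    exact ⟨K, hK, δ, hδ, fun ψ hψ x hx =>
      hthick (Metric.mem_thickening_iff.mpr ⟨χ₀.1 x, ⟨x, hx, rfl⟩, hψ x hx⟩)⟩
  | univ => exact ⟨∅, isCompact_empty, 1, one_pos, fun _ _ => trivial⟩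
  | inter S₁ S₂ _ _ ih₁ ih₂ =>
    obtain ⟨K₁, hK₁, ε₁, hε₁, h₁⟩ := ih₁ hχ₀.1
    obtain ⟨K₂, hK₂, ε₂, hε₂, h₂⟩ := ih₂ hχ₀.2
    refine ⟨K₁ ∪ K₂, hK₁.union hK₂, min ε₁ ε₂, lt_min hε₁ hε₂, fun ψ hψ => ⟨?_, ?_⟩⟩
    · exact h₁ ψ fun x hx => (hψ x (Or.inl hx)).trans_le (min_le_left _ _)
    · exact h₂ ψ fun x hx => (hψ x (Or.inr hx)).trans_le (min_le_right _ _)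
  | sUnion S _ ih =>
    obtain ⟨s, hs, hχs⟩ := hχ₀
    obtain ⟨K, hK, ε, hε, h⟩ := ih s hs hχs
    exact ⟨K, hK, ε, hε, fun ψ hψ => ⟨s, hs, h ψ hψ⟩⟩

lemma exists_isCompact_forall_norm_lt_eq_zero_of_charTopology_eq_bot [t : TopologicalSpace G]
    (hdisc : charTopology G t = ⊥) : ∃ K : Set G, IsCompact K ∧ ∃ ε > (0 : ℝ),
      ∀ χ : G →+ Torus, Continuous χ → (∀ x ∈ K, ‖χ x‖ < ε) → χ = 0 := by
  have hO : IsOpen[charTopology G t] {ψ : charGroup G t | ψ.1 = 0} := by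
    rw [hdisc]
    trivial
  obtain ⟨K, hK, ε, hε, h⟩ :=
    exists_isCompact_forall_dist_lt_mem_of_isOpen hO (χ₀ := ⟨0, continuous_const⟩) rfl
  exact ⟨K, hK, ε, hε, fun χ hχ hsmall => h ⟨χ, hχ⟩ fun x hx => by simpa using hsmall x hx⟩

lemma exists_finite_subset_forall_dist_lt {α X : Type*} [PseudoMetricSpace X] [CompactSpace X]
    (e : α → X) (S : Set α) {δ : ℝ} (hδ : 0 < δ) :
    ∃ F ⊆ S, F.Finite ∧ ∀ x ∈ S, ∃ y ∈ F, dist (e x) (e y) < δ := by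
  obtain ⟨C, hCS, hC, hcov⟩ := Metric.finite_approx_of_totallyBounded
    (isCompact_univ.totallyBounded.subset (Set.subset_univ (e '' S))) δ hδ
  obtain ⟨F, hFS, hF, hcov⟩ := Set.exists_subset_image_finite_and
    (p := fun C => e '' S ⊆ ⋃ y ∈ C, Metric.ball y δ) |>.mp ⟨C, hCS, hC, hcov⟩
  refine ⟨F, hFS, hF, fun x hx => ?_⟩
  obtain ⟨_, ⟨y, hy, rfl⟩, hxy⟩ := Set.mem_iUnion₂.mp (hcov ⟨x, hx, rfl⟩)
  exact ⟨y, hy, hxy⟩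

lemma finite_polar [t : TopologicalSpace G] [IsTopologicalAddGroup G]
    (hdisc : charTopology G t = ⊥) {V : Set G} (hV : V ∈ 𝓝 0) : (polar t V).Finite := by
  obtain ⟨K, hK, ε, hε, hkey⟩ :=
    exists_isCompact_forall_norm_lt_eq_zero_of_charTopology_eq_bot hdisc
  obtain ⟨W, hW, hsmall⟩ := exists_nhds_forall_mem_polar_norm_lt hV (by positivity : 0 < ε / 4)
  obtain ⟨F₀, -, hKcov⟩ := hK.elim_nhds_subcover (fun f => {y : G | y - f ∈ W})
    fun x _ => (continuous_sub_right x).continuousAt.preimage_mem_nhds (by rwa [sub_self])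
  have hsep : ∀ φ ∈ polar t V, ∀ ψ ∈ polar t V,
      dist (fun f : F₀ => φ f) (fun f : F₀ => ψ f) < ε / 2 → φ = ψ := by
    intro φ hφ ψ hψ hclose
    have hc : Continuous (φ - ψ) := (hφ.1 : Continuous φ).sub hψ.1
    refine sub_eq_zero.mp (hkey _ hc fun x hx => ?_)
    obtain ⟨f, hf, hxf⟩ := Set.mem_iUnion₂.mp (hKcov hx)
    have hsplit : (φ - ψ) x = (φ f - ψ f) + (φ (x - f) - ψ (x - f)) := by
      simp only [AddMonoidHom.sub_apply, map_sub]
      abel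
    have hf : ‖φ f - ψ f‖ < ε / 2 := by
      rw [← dist_eq_norm]
      exact (dist_le_pi_dist (fun f : F₀ => φ f) (fun f : F₀ => ψ f) ⟨f, hf⟩).trans_lt hclose
    calc ‖(φ - ψ) x‖ ≤ ‖φ f - ψ f‖ + (‖φ (x - f)‖ + ‖ψ (x - f)‖) := by
          rw [hsplit]
          exact (norm_add_le _ _).trans (by gcongr; exact norm_sub_le _ _)
      _ < ε / 2 + (ε / 4 + ε / 4) := by
          gcongr
          exacts [hsmall φ hφ _ hxf, hsmall ψ hψ _ hxf]
      _ = ε := by ring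
  obtain ⟨F, hFV, hF, hcov⟩ := exists_finite_subset_forall_dist_lt
    (fun (χ : G →+ Torus) (f : F₀) => χ f) (polar t V) (by positivity : 0 < ε / 2)
  refine hF.subset fun χ hχ => ?_
  obtain ⟨ψ, hψF, hχψ⟩ := hcov χ hχ
  exact hsep χ hχ ψ (hFV hψF) hχψ ▸ hψF

end

theorem stmt12_general {G : Type*} [AddCommGroup G] [t : TopologicalSpace G]
    [IsTopologicalAddGroup G]
    (hlqc : IsLocallyQuasiConvex t) (hdisc : charTopology G t = ⊥) :
    PrecompactCover t := by
  intro U hU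
  obtain ⟨V, hV, hVU, hQC⟩ := hlqc U hU
  have : Fintype (polar t V) := (finite_polar hdisc hV).fintype
  obtain ⟨F, -, hF, hcov⟩ := exists_finite_subset_forall_dist_lt
    (fun (x : G) (χ : polar t V) => χ.1 x) Set.univ (by norm_num : (0 : ℝ) < 1 / 4)
  refine ⟨F, hF, fun x => ?_⟩
  obtain ⟨y, hyF, hxy⟩ := hcov x trivial
  refine ⟨y, hyF, hVU (hQC.mem_of_forall_mem_polar fun χ hχ => mem_Tplus_iff.mpr ?_)⟩
  calc ‖χ (x - y)‖ = dist (χ x) (χ y) := by rw [map_sub, dist_eq_norm]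
    _ ≤ dist (fun ψ : polar t V => ψ.1 x) (fun ψ => ψ.1 y) :=
        dist_le_pi_dist (fun ψ : polar t V => ψ.1 x) (fun ψ => ψ.1 y) ⟨χ, hχ⟩
    _ ≤ 1 / 4 := hxy.le

/-- A Hausdorff locally quasi-convex topological abelian group with
discrete Pontryagin dual is precompact. -/
theorem stmt12 {G : Type*} [AddCommGroup G] [t : TopologicalSpace G]
    [IsTopologicalAddGroup G] [T2Space G]
    (hlqc : IsLocallyQuasiConvex t) (hdisc : charTopology G t = ⊥) :
    PrecompactCover t :=
  stmt12_general (t := t) hlqc hdisc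

end SSChar
end
end

section
/- Let G be a Hausdorff topological abelian group and H a closed subgroup of G. Assume that the quotient group G/H (with the quotient topology) has no non-trivial convergent sequences, i.e., every convergent sequence in G/H is eventually constant. Then G is sequentially complete if and only if H (with the subspace topology) is sequentially complete. -/
open Filter Topology

noncomputable section

namespace SSChar

variable {G : Type*}

/-- The Cauchy condition of `SeqComplete`, for the topology carried by the instance. -/
def IsGroupCauchySeq {X : Type*} [AddCommGroup X] [TopologicalSpace X] (x : ℕ → X) : Prop :=
  ∀ U ∈ 𝓝 (0 : X), ∃ N : ℕ, ∀ m ≥ N, ∀ n ≥ N, x m - x n ∈ U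

section Cauchy

variable {X Y : Type*} [AddCommGroup X] [TopologicalSpace X] [AddCommGroup Y] [TopologicalSpace Y]
  {x : ℕ → X}

theorem isGroupCauchySeq_iff_of_isInducing {f : X →+ Y} (hf : IsInducing f) :
    IsGroupCauchySeq x ↔ IsGroupCauchySeq (fun n => f (x n)) := by
  simp only [IsGroupCauchySeq, hf.nhds_eq_comap, map_zero, mem_comap]
  constructor
  · intro hx U hU
    obtain ⟨N, hN⟩ := hx _ ⟨U, hU, subset_rfl⟩
    exact ⟨N, fun m hm n hn => by simpa using hN m hm n hn⟩
  · rintro hfx V ⟨U, hU, hUV⟩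
    obtain ⟨N, hN⟩ := hfx U hU
    exact ⟨N, fun m hm n hn => hUV (by simpa using hN m hm n hn)⟩

theorem IsGroupCauchySeq.tendsto_sub_succ (hx : IsGroupCauchySeq x) :
    Tendsto (fun n => x (n + 1) - x n) atTop (𝓝 0) := fun U hU => by
  obtain ⟨N, hN⟩ := hx U hU
  exact mem_atTop_sets.2 ⟨N, fun n hn => hN (n + 1) (by omega) n hn⟩

theorem IsGroupCauchySeq.comp_add_right (hx : IsGroupCauchySeq x) (k : ℕ) :
    IsGroupCauchySeq (fun n => x (n + k)) := fun U hU => by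
  obtain ⟨N, hN⟩ := hx U hU
  exact ⟨N, fun m hm n hn => hN _ (by omega) _ (by omega)⟩

theorem IsGroupCauchySeq.sub_const (hx : IsGroupCauchySeq x) (c : X) :
    IsGroupCauchySeq (fun n => x n - c) := by
  simpa only [IsGroupCauchySeq, sub_sub_sub_cancel_right] using hx

end Cauchy

section Subgroup

variable {G : Type*} [AddCommGroup G] [t : TopologicalSpace G] {H : AddSubgroup G}

theorem isGroupCauchySeq_subtype_iff {x : ℕ → H} :
    IsGroupCauchySeq x ↔ IsGroupCauchySeq (fun n => (x n : G)) :=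
  isGroupCauchySeq_iff_of_isInducing (f := H.subtype) IsInducing.subtypeVal

theorem seqComplete_restrictTopology (hcl : IsClosed (H : Set G)) (hG : SeqComplete t) :
    SeqComplete (restrictTopology H t) := by
  intro x hx
  obtain ⟨a, ha⟩ := hG _ (isGroupCauchySeq_subtype_iff.1 hx)
  have haH : a ∈ H := hcl.mem_of_tendsto ha (.of_forall fun n => (x n).2)
  exact ⟨⟨a, haH⟩, tendsto_subtype_rng.2 ha⟩

variable [IsTopologicalAddGroup G]

/-- The differences `x (n + 1) - x n` tend to `0`, so their classes modulo `H` are eventually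
constant; since `G ⧸ H` is T1, that constant is `0`. -/
theorem IsGroupCauchySeq.exists_forall_ge_sub_mem (hcl : IsClosed (H : Set G))
    (hq : ∀ (y : ℕ → G ⧸ H) (q : G ⧸ H), Tendsto y atTop (𝓝 q) → ∃ N : ℕ, ∀ n ≥ N, y n = y N)
    {x : ℕ → G} (hx : IsGroupCauchySeq x) : ∃ N : ℕ, ∀ n ≥ N, x n - x N ∈ H := by
  have := QuotientAddGroup.t1Space_iff.2 hcl
  have hd : Tendsto (fun n => ((x (n + 1) - x n : G) : G ⧸ H)) atTop (𝓝 0) :=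
    (QuotientAddGroup.continuous_mk.tendsto' 0 0 rfl).comp hx.tendsto_sub_succ
  obtain ⟨N, hN⟩ := hq _ 0 hd
  have hdN : ((x (N + 1) - x N : G) : G ⧸ H) = 0 :=
    tendsto_const_nhds_iff.1 (hd.congr' (eventually_atTop.2 ⟨N, fun n hn => hN n hn⟩))
  refine ⟨N, Nat.le_induction (by simp) fun n hn ih => ?_⟩
  have hstep : x (n + 1) - x n ∈ H := (QuotientAddGroup.eq_zero_iff _).1 ((hN n hn).trans hdN)
  simpa using add_mem hstep ih

theorem seqComplete_of_restrictTopology (hcl : IsClosed (H : Set G))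
    (hq : ∀ (y : ℕ → G ⧸ H) (q : G ⧸ H), Tendsto y atTop (𝓝 q) → ∃ N : ℕ, ∀ n ≥ N, y n = y N)
    (hH : SeqComplete (restrictTopology H t)) : SeqComplete t := by
  intro x (hx : IsGroupCauchySeq x)
  obtain ⟨N, hN⟩ := IsGroupCauchySeq.exists_forall_ge_sub_mem hcl hq hx
  let h : ℕ → H := fun n => ⟨x (n + N) - x N, hN _ (by omega)⟩
  obtain ⟨a, ha⟩ := hH h <| isGroupCauchySeq_subtype_iff.2 <| (hx.comp_add_right N).sub_const _
  refine ⟨a + x N, (tendsto_add_atTop_iff_nat N).1 ?_⟩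
  simpa [h] using (tendsto_subtype_rng.1 ha).add_const (x N)

end Subgroup

theorem stmt17_general {G : Type*} [AddCommGroup G] [t : TopologicalSpace G]
    [IsTopologicalAddGroup G]
    (H : AddSubgroup G) (hcl : IsClosed (H : Set G))
    (hq : ∀ (y : ℕ → G ⧸ H) (q : G ⧸ H),
      Filter.Tendsto y Filter.atTop (@nhds (G ⧸ H) (quotientTopology H t) q) →
      ∃ N : ℕ, ∀ n ≥ N, y n = y N) :
    SeqComplete t ↔ SeqComplete (restrictTopology H t) :=
  ⟨seqComplete_restrictTopology hcl, seqComplete_of_restrictTopology hcl hq⟩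

/-- Let `H` be a closed subgroup of a Hausdorff topological abelian group
`G` such that every convergent sequence in the quotient `G/H` is eventually constant.
Then `G` is sequentially complete iff `H` is sequentially complete. -/
theorem stmt17 {G : Type*} [AddCommGroup G] [t : TopologicalSpace G]
    [IsTopologicalAddGroup G] [T2Space G]
    (H : AddSubgroup G) (hcl : IsClosed (H : Set G))
    (hq : ∀ (y : ℕ → G ⧸ H) (q : G ⧸ H),
      Filter.Tendsto y Filter.atTop (@nhds (G ⧸ H) (quotientTopology H t) q) →
      ∃ N : ℕ, ∀ n ≥ N, y n = y N) :
    SeqComplete t ↔ SeqComplete (restrictTopology H t) :=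
  stmt17_general (t := t) H hcl hq

end SSChar
end
end
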